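/- arXiv:2509.11828 — 3 statements merged into one kernel-verified Lean document; each statement's English description precedes it below -/
import Mathlib

section
/- Let n ≥ 1, μ ∈ ℝ, 0 < a < n, 0 < b < 1, and 1 < p < q < ∞. Suppose there is a finite constant B such that for every nonnegative measurable f ∈ L^p(ℝ^{2n+1}) one has ‖S_{ab}f‖_{L^q(ℝ^{2n+1})} ≤ B ‖f‖_{L^p(ℝ^{2n+1})}, where S_{ab}f(u,v,t) = ∭_{ℝ^{2n+1}} f(ξ,η,τ) Ω^{ab}[(u,v,t)⊙(ξ,η,τ)^{-1}] dξ dη dτ. Then necessarily b ≤ 1/p − 1/q, and together with the necessary homogeneity condition (a+b)/(n+1) = 1/p − 1/q this forces a ≥ n·b. -/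
open MeasureTheory Real
open scoped RealInnerProductSpace ENNReal

noncomputable section

/-- Euclidean space ℝⁿ. -/
abbrev En (n : ℕ) := EuclideanSpace ℝ (Fin n)

/-- The kernel `Ω^{ab}(ξ,η,τ) = (|ξ|²+|η|²)^{-(n-a)} (|ξ|²+|η|²+|τ|)^{-(1-b)}`. -/
noncomputable def Omker (n : ℕ) (a b : ℝ) (ξ η : En n) (τ : ℝ) : ℝ :=
  (‖ξ‖ ^ 2 + ‖η‖ ^ 2) ^ (-(n - a)) * (‖ξ‖ ^ 2 + ‖η‖ ^ 2 + |τ|) ^ (-(1 - b))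

/-- The fractional integral operator `S_{ab}` on the Heisenberg-type group with
parameter `μ`:  the kernel is evaluated at `(u,v,t) ⊙ (ξ,η,τ)⁻¹
  = (u-ξ, v-η, t-τ-μ(u·η - v·ξ))`. -/
noncomputable def Sop (n : ℕ) (μ a b : ℝ) (f : En n × En n × ℝ → ℝ)
    (x : En n × En n × ℝ) : ℝ :=
  ∫ y : En n × En n × ℝ,
    f y * Omker n a b (x.1 - y.1) (x.2.1 - y.2.1)
      (x.2.2 - y.2.2 - μ * (⟪x.1, y.2.1⟫ - ⟪x.2.1, y.1⟫))

open Metric Set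

/-! Test `S_{ab}` on the indicator of the cylinder `C_R = B(0,1) × B(0,1) × [-R, R]`. For `x` in
the translate `B(w,1) × B(0,1) × [-R, R]` with `‖w‖ = 3`, the horizontal part of `x ⊙ y⁻¹`,
`y ∈ C_R`, has squared norm in `[1, 29]` and the vertical part is `O(R)`, so the kernel is
`≳ R^{b-1}` there and `S_{ab} 1_{C_R} ≳ R^{b-1} |C_R|` on a set of measure `|C_R| ∼ R`. The
`L^p → L^q` bound therefore gives `R^{b-1} · R · R^{1/q} ≲ R^{1/p}` for all `R ≥ 1`, that is
`b + 1/q ≤ 1/p`; with `(a+b)/(n+1) = 1/p - 1/q` this is `n b ≤ a`. -/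

lemma nonpos_of_forall_rpow_le {α C : ℝ} (h : ∀ R : ℝ, 1 ≤ R → R ^ α ≤ C) : α ≤ 0 := by
  by_contra! hα
  obtain ⟨R, hRC, hR1⟩ :=
    (((tendsto_rpow_atTop hα).eventually_gt_atTop C).and (Filter.eventually_ge_atTop 1)).exists
  exact (h R hR1).not_gt hRC

lemma le_of_forall_mul_rpow_le {α β c C : ℝ} (hc : 0 < c)
    (h : ∀ R : ℝ, 1 ≤ R → c * R ^ α ≤ C * R ^ β) : α ≤ β := by
  suffices α - β ≤ 0 by linarith
  refine nonpos_of_forall_rpow_le (C := C / c) fun R hR => ?_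
  have hR0 : 0 < R := one_pos.trans_le hR
  rw [le_div_iff₀' hc, rpow_sub hR0, mul_div_assoc', div_le_iff₀ (rpow_pos_of_pos hR0 β)]
  exact h R hR

lemma add_le_of_forall_scaling {b p q c K E B : ℝ} (hc : 0 < c) (hK : 0 < K) (hE : 0 < E)
    (h : ∀ R : ℝ, 1 ≤ R →
      c * (K * R) ^ (b - 1) * (E * R) * (E * R) ^ (1 / q) ≤ B * (E * R) ^ (1 / p)) :
    b + 1 / q ≤ 1 / p := by
  refine le_of_forall_mul_rpow_le (c := c * K ^ (b - 1) * E ^ (1 + 1 / q))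
    (C := B * E ^ (1 / p)) (by positivity) fun R hR => ?_
  have hR0 : 0 < R := one_pos.trans_le hR
  convert h R hR using 1
  · rw [mul_rpow hK.le hR0.le, mul_rpow hE.le hR0.le, rpow_add hR0, rpow_add hE, rpow_one,
      rpow_sub_one hR0.ne']
    field_simp
  · rw [mul_rpow hE.le hR0.le]; ring

section Kernel

variable {n : ℕ} {μ a b : ℝ}

lemma Omker_le_one (han : a ≤ n) (hb : b ≤ 1) {ξ η : En n} {τ : ℝ}
    (h : 1 ≤ ‖ξ‖ ^ 2 + ‖η‖ ^ 2) : Omker n a b ξ η τ ≤ 1 :=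
  mul_le_one₀ (rpow_le_one_of_one_le_of_nonpos h (by linarith)) (by positivity)
    (rpow_le_one_of_one_le_of_nonpos (by linarith [abs_nonneg τ]) (by linarith))

lemma rpow_mul_rpow_le_Omker (han : a ≤ n) (hb : b ≤ 1) {ξ η : En n} {τ S T : ℝ}
    (h0 : 0 < ‖ξ‖ ^ 2 + ‖η‖ ^ 2) (hS : ‖ξ‖ ^ 2 + ‖η‖ ^ 2 ≤ S)
    (hT : ‖ξ‖ ^ 2 + ‖η‖ ^ 2 + |τ| ≤ T) :
    S ^ (a - n) * T ^ (b - 1) ≤ Omker n a b ξ η τ := by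
  rw [Omker, neg_sub, neg_sub]
  exact mul_le_mul (rpow_le_rpow_of_nonpos h0 hS (by linarith))
    (rpow_le_rpow_of_nonpos (by positivity) hT (by linarith))
    (rpow_nonneg ((by positivity : (0 : ℝ) ≤ _).trans hT) _) (by positivity)

variable (n μ a b) in
def heisKernel (x y : En n × En n × ℝ) : ℝ :=
  Omker n a b (x.1 - y.1) (x.2.1 - y.2.1) (x.2.2 - y.2.2 - μ * (⟪x.1, y.2.1⟫ - ⟪x.2.1, y.1⟫))

lemma Sop_eq_integral_heisKernel (f : En n × En n × ℝ → ℝ) (x : En n × En n × ℝ) :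
    Sop n μ a b f x = ∫ y, f y * heisKernel n μ a b x y := rfl

lemma heisKernel_nonneg (x y : En n × En n × ℝ) : 0 ≤ heisKernel n μ a b x y := by
  unfold heisKernel Omker; positivity

lemma measurable_heisKernel (x : En n × En n × ℝ) : Measurable (heisKernel n μ a b x) := by
  unfold heisKernel Omker
  fun_prop

end Kernel

section Cylinder

variable {n : ℕ}

def heisCylinder (c : En n) (R : ℝ) : Set (En n × En n × ℝ) :=
  closedBall c 1 ×ˢ closedBall 0 1 ×ˢ Icc (-R) R

lemma mem_heisCylinder {c : En n} {R : ℝ} {x : En n × En n × ℝ} :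
    x ∈ heisCylinder c R ↔ ‖x.1 - c‖ ≤ 1 ∧ ‖x.2.1‖ ≤ 1 ∧ |x.2.2| ≤ R := by
  simp only [heisCylinder, mem_prod, mem_closedBall, dist_eq_norm, sub_zero, mem_Icc, abs_le]

lemma measurableSet_heisCylinder (c : En n) (R : ℝ) : MeasurableSet (heisCylinder c R) :=
  measurableSet_closedBall.prod (measurableSet_closedBall.prod measurableSet_Icc)

lemma volume_heisCylinder (c : En n) (R : ℝ) :
    volume (heisCylinder c R) = volume (closedBall (0 : En n) 1) ^ 2 * ENNReal.ofReal (2 * R) := by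
  rw [heisCylinder, Measure.volume_eq_prod, Measure.prod_prod, Measure.volume_eq_prod,
    Measure.prod_prod, Real.volume_Icc, Measure.addHaar_closedBall_center, sq, mul_assoc]
  ring_nf

lemma volume_heisCylinder_ne_top (c : En n) (R : ℝ) : volume (heisCylinder c R) ≠ ∞ := by
  rw [volume_heisCylinder]
  exact ENNReal.mul_ne_top (ENNReal.pow_ne_top measure_closedBall_lt_top.ne) ENNReal.ofReal_ne_top

lemma measureReal_heisCylinder (c : En n) {R : ℝ} (hR : 0 ≤ R) :
    volume.real (heisCylinder c R) = 2 * volume.real (closedBall (0 : En n) 1) ^ 2 * R := by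
  rw [measureReal_def, volume_heisCylinder, ENNReal.toReal_mul, ENNReal.toReal_pow,
    ENNReal.toReal_ofReal (by linarith), measureReal_def]
  ring

lemma measureReal_closedBall_zero_one_pos : 0 < volume.real (closedBall (0 : En n) 1) :=
  ENNReal.toReal_pos (measure_closedBall_pos _ _ one_pos).ne' measure_closedBall_lt_top.ne

variable {w : En n} {R : ℝ} {x y : En n × En n × ℝ}

lemma norm_fst_sub_mem_Icc (hw : ‖w‖ = 3) (hx : x ∈ heisCylinder w R) (hy : y ∈ heisCylinder 0 R) :
    ‖x.1 - y.1‖ ∈ Icc 1 5 := by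
  rw [mem_heisCylinder] at hx hy
  rw [sub_zero] at hy
  have hx_lower := norm_sub_norm_le w x.1
  have hx_upper := norm_le_norm_add_norm_sub' x.1 w
  constructor
  · linarith [norm_sub_norm_le x.1 y.1, norm_sub_rev w x.1]
  · linarith [norm_sub_le x.1 y.1]

lemma norm_snd_fst_sub_le (hx : x ∈ heisCylinder w R) (hy : y ∈ heisCylinder 0 R) :
    ‖x.2.1 - y.2.1‖ ≤ 2 := by
  rw [mem_heisCylinder] at hx hy
  linarith [norm_sub_le x.2.1 y.2.1]

lemma abs_sub_sub_mul_symplectic_le (μ : ℝ) (hw : ‖w‖ = 3) (hx : x ∈ heisCylinder w R)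
    (hy : y ∈ heisCylinder 0 R) :
    |x.2.2 - y.2.2 - μ * (⟪x.1, y.2.1⟫ - ⟪x.2.1, y.1⟫)| ≤ 2 * R + 5 * |μ| := by
  obtain ⟨hxw, hx2, hx3⟩ := mem_heisCylinder.1 hx
  obtain ⟨hy1, hy2, hy3⟩ := mem_heisCylinder.1 hy
  rw [sub_zero] at hy1
  have hx1 : ‖x.1‖ ≤ 4 := by linarith [norm_le_norm_add_norm_sub' x.1 w]
  have hsympl : |⟪x.1, y.2.1⟫ - ⟪x.2.1, y.1⟫| ≤ 5 := by
    have h1 : ‖x.1‖ * ‖y.2.1‖ ≤ 4 * 1 := by gcongr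
    have h2 : ‖x.2.1‖ * ‖y.1‖ ≤ 1 * 1 := by gcongr
    linarith [abs_sub ⟪x.1, y.2.1⟫ ⟪x.2.1, y.1⟫, abs_real_inner_le_norm x.1 y.2.1,
      abs_real_inner_le_norm x.2.1 y.1]
  calc _ ≤ |x.2.2| + |y.2.2| + |μ| * |⟪x.1, y.2.1⟫ - ⟪x.2.1, y.1⟫| := by
        rw [← abs_mul]; exact (abs_sub _ _).trans (by gcongr; exact abs_sub _ _)
    _ ≤ 2 * R + 5 * |μ| := by nlinarith [abs_nonneg μ]

end Cylinder

section Estimates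

variable {n : ℕ} {μ a b : ℝ} {w : En n} {R : ℝ} {x y : En n × En n × ℝ}

lemma heisKernel_le_one (han : a ≤ n) (hb : b ≤ 1) (hw : ‖w‖ = 3)
    (hx : x ∈ heisCylinder w R) (hy : y ∈ heisCylinder 0 R) : heisKernel n μ a b x y ≤ 1 :=
  Omker_le_one han hb
    (by nlinarith [(norm_fst_sub_mem_Icc hw hx hy).1, norm_nonneg (x.2.1 - y.2.1)])

lemma le_heisKernel (han : a ≤ n) (hb : b ≤ 1) (hw : ‖w‖ = 3) (hR : 1 ≤ R)
    (hx : x ∈ heisCylinder w R) (hy : y ∈ heisCylinder 0 R) :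
    29 ^ (a - n) * ((31 + 5 * |μ|) * R) ^ (b - 1) ≤ heisKernel n μ a b x y := by
  obtain ⟨h1, h5⟩ := norm_fst_sub_mem_Icc hw hx hy
  have h2 := norm_snd_fst_sub_le hx hy
  have hτ := abs_sub_sub_mul_symplectic_le μ hw hx hy
  have h0 := norm_nonneg (x.2.1 - y.2.1)
  exact rpow_mul_rpow_le_Omker han hb (by nlinarith) (by nlinarith)
    (by nlinarith [abs_nonneg μ])

lemma le_Sop_indicator_heisCylinder (han : a ≤ n) (hb : b ≤ 1) (hw : ‖w‖ = 3) (hR : 1 ≤ R)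
    (hx : x ∈ heisCylinder w R) :
    29 ^ (a - n) * ((31 + 5 * |μ|) * R) ^ (b - 1) * volume.real (heisCylinder (0 : En n) R) ≤
      Sop n μ a b ((heisCylinder 0 R).indicator 1) x := by
  have hA := measurableSet_heisCylinder (0 : En n) R
  have hint : IntegrableOn (heisKernel n μ a b x) (heisCylinder 0 R) := by
    refine Measure.integrableOn_of_bounded (M := 1) (volume_heisCylinder_ne_top 0 R)
      (measurable_heisKernel x).aestronglyMeasurable (ae_restrict_of_forall_mem hA fun y hy => ?_)
    rw [Real.norm_of_nonneg (heisKernel_nonneg x y)]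
    exact heisKernel_le_one han hb hw hx hy
  rw [Sop_eq_integral_heisKernel]
  simp_rw [← indicator_mul_left, Pi.one_apply, one_mul]
  rw [integral_indicator hA]
  exact setIntegral_ge_of_const_le_real hA (volume_heisCylinder_ne_top 0 R)
    (fun y hy => le_heisKernel han hb hw hR hx hy) hint

end Estimates

lemma ofReal_mul_measure_rpow_le_eLpNorm {α : Type*} [MeasurableSpace α] {ν : Measure α}
    {s : Set α} {g : α → ℝ} {m q : ℝ} (hs : MeasurableSet s) (hm : 0 ≤ m) (hq : 0 < q)
    (h : ∀ x ∈ s, m ≤ g x) :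
    ENNReal.ofReal m * ν s ^ (1 / q) ≤ eLpNorm g (ENNReal.ofReal q) ν := by
  calc ENNReal.ofReal m * ν s ^ (1 / q)
      = eLpNorm (s.indicator fun _ => m) (ENNReal.ofReal q) ν := by
        rw [eLpNorm_indicator_const hs (by simpa using hq) ENNReal.ofReal_ne_top,
          Real.enorm_eq_ofReal hm, ENNReal.toReal_ofReal hq.le]
    _ ≤ eLpNorm g (ENNReal.ofReal q) ν := by
        refine eLpNorm_mono fun x => ?_
        by_cases hx : x ∈ s
        · rw [indicator_of_mem hx, Real.norm_of_nonneg hm]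
          exact (h x hx).trans (le_abs_self _)
        · simp [indicator_of_notMem hx]

def SopBounded (n : ℕ) (μ a b p q B : ℝ) : Prop :=
  ∀ f : En n × En n × ℝ → ℝ, Measurable f → (∀ x, 0 ≤ f x) → MemLp f (ENNReal.ofReal p) volume →
    eLpNorm (Sop n μ a b f) (ENNReal.ofReal q) volume ≤
      ENNReal.ofReal B * eLpNorm f (ENNReal.ofReal p) volume

lemma mul_rpow_le_of_SopBounded {n : ℕ} {μ a b p q B R : ℝ} {w : En n} (hw : ‖w‖ = 3)
    (han : a ≤ n) (hb : b ≤ 1) (hp : 0 < p) (hq : 0 < q) (hB : SopBounded n μ a b p q B)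
    (hR : 1 ≤ R) :
    let E := 2 * volume.real (closedBall (0 : En n) 1) ^ 2
    29 ^ (a - n) * ((31 + 5 * |μ|) * R) ^ (b - 1) * (E * R) * (E * R) ^ (1 / q) ≤
      B * (E * R) ^ (1 / p) := by
  intro E
  set A := heisCylinder (0 : En n) R
  have hA := measurableSet_heisCylinder (0 : En n) R
  have hball := measureReal_closedBall_zero_one_pos (n := n)
  rw [← measureReal_heisCylinder 0 (by linarith)]
  set k := 29 ^ (a - n) * ((31 + 5 * |μ|) * R) ^ (b - 1)
  have hk : 0 < k := by positivity
  have hv : 0 < volume.real A := by rw [measureReal_heisCylinder 0 (by linarith)]; positivity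
  have hvA : volume A = ENNReal.ofReal (volume.real A) :=
    (ENNReal.ofReal_toReal (volume_heisCylinder_ne_top 0 R)).symm
  have hvX : volume (heisCylinder w R) = volume A := by
    rw [volume_heisCylinder, volume_heisCylinder]
  have hlower : ENNReal.ofReal (k * volume.real A) * volume (heisCylinder w R) ^ (1 / q) ≤
      eLpNorm (Sop n μ a b (A.indicator 1)) (ENNReal.ofReal q) volume :=
    ofReal_mul_measure_rpow_le_eLpNorm (measurableSet_heisCylinder w R) (by positivity) hq
      fun x hx => le_Sop_indicator_heisCylinder han hb hw hR hx
  have hupper := hB (A.indicator (1 : En n × En n × ℝ → ℝ)) (measurable_one.indicator hA)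
    (fun _ => indicator_nonneg (fun _ _ => zero_le_one) _)
    (memLp_indicator_const _ hA (1 : ℝ) (Or.inr (volume_heisCylinder_ne_top 0 R)))
  have hnorm : eLpNorm (A.indicator (1 : En n × En n × ℝ → ℝ)) (ENNReal.ofReal p) volume =
      ENNReal.ofReal (volume.real A ^ (1 / p)) := by
    rw [← ENNReal.ofReal_rpow_of_nonneg hv.le (by positivity), ← hvA]
    refine (eLpNorm_indicator_const (μ := volume) (c := (1 : ℝ)) hA (by simpa using hp)
      ENNReal.ofReal_ne_top).trans ?_
    rw [ENNReal.toReal_ofReal hp.le, enorm_one, one_mul, one_div]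
  have key : ENNReal.ofReal (k * volume.real A * volume.real A ^ (1 / q)) ≤
      ENNReal.ofReal (B * volume.real A ^ (1 / p)) := by
    calc _ = ENNReal.ofReal (k * volume.real A) * volume (heisCylinder w R) ^ (1 / q) := by
          rw [ENNReal.ofReal_mul (by positivity), hvX, hvA,
            ENNReal.ofReal_rpow_of_nonneg hv.le (by positivity)]
      _ ≤ _ := hlower.trans hupper
      _ = _ := by rw [hnorm, ← ENNReal.ofReal_mul' (by positivity)]
  exact (ENNReal.ofReal_le_ofReal_iff'.1 key).resolve_right (not_le.2 (by positivity))

theorem stmt4_general (n : ℕ) (hn : 1 ≤ n) (μ a b p q B : ℝ)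
    (han : a < n) (hb1 : b < 1)
    (hp : 1 < p) (hpq : p < q)
    (hB : ∀ f : En n × En n × ℝ → ℝ,
      Measurable f → (∀ x, 0 ≤ f x) →
      MemLp f (ENNReal.ofReal p) volume →
      eLpNorm (Sop n μ a b f) (ENNReal.ofReal q) volume ≤
        ENNReal.ofReal B * eLpNorm f (ENNReal.ofReal p) volume) :
    b ≤ 1 / p - 1 / q ∧ ((a + b) / (n + 1) = 1 / p - 1 / q → n * b ≤ a) := by
  obtain ⟨w, hw⟩ : ∃ w : En n, ‖w‖ = 3 := by
    have : NeZero n := ⟨by omega⟩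
    exact exists_norm_eq _ (by norm_num)
  have hball := measureReal_closedBall_zero_one_pos (n := n)
  have hscale : b + 1 / q ≤ 1 / p :=
    add_le_of_forall_scaling (by positivity : (0 : ℝ) < 29 ^ (a - n))
      (by positivity : (0 : ℝ) < 31 + 5 * |μ|) (by positivity)
      fun R hR => mul_rpow_le_of_SopBounded hw han.le hb1.le (by linarith) (by linarith) hB hR
  have hb : b ≤ 1 / p - 1 / q := by linarith
  refine ⟨hb, fun hhom => ?_⟩
  rw [div_eq_iff (by positivity)] at hhom
  nlinarith

theorem stmt4 (n : ℕ) (hn : 1 ≤ n) (μ a b p q B : ℝ)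
    (ha0 : 0 < a) (han : a < n) (hb0 : 0 < b) (hb1 : b < 1)
    (hp : 1 < p) (hpq : p < q)
    (hB : ∀ f : En n × En n × ℝ → ℝ,
      Measurable f → (∀ x, 0 ≤ f x) →
      MemLp f (ENNReal.ofReal p) volume →
      eLpNorm (Sop n μ a b f) (ENNReal.ofReal q) volume ≤
        ENNReal.ofReal B * eLpNorm f (ENNReal.ofReal p) volume) :
    b ≤ 1 / p - 1 / q ∧ ((a + b) / (n + 1) = 1 / p - 1 / q → n * b ≤ a) :=
  stmt4_general n hn μ a b p q B han hb1 hp hpq hB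
end
end

section
/- Let n ≥ 1, 0 < a < n, 0 < b < 1 with a ≥ n·b, and let θ satisfy b < θ < 1 − (a−nb)/(n+1). For all ξ, η ∈ ℝⁿ and τ ∈ ℝ with ξ ≠ 0, η ≠ 0, τ ≠ 0 and |ξ||η| ≤ |τ|, one has Ω^{ab}(ξ,η,τ) ≤ |ξ|^{(a+θ−1)−n} |η|^{(a+θ−1)−n} |τ|^{(b−θ+1)−1} ( |ξ||η|/|τ| + |τ|/(|ξ||η|) )^{−(1−θ)} ≤ V^{αβ}(ξ,η,τ) with α = a + θ − 1 and β = b − θ + 1 (so that α + β = a + b). -/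
open MeasureTheory Real
open scoped ENNReal

noncomputable section

/-- The kernel `V^{αβ}(ξ,η,τ)`. -/
noncomputable def Vker (n : ℕ) (α β : ℝ) (ξ η : En n) (τ : ℝ) : ℝ :=
  ‖ξ‖ ^ (α - n) * ‖η‖ ^ (α - n) * |τ| ^ (β - 1) *
    (‖ξ‖ * ‖η‖ / |τ| + |τ| / (‖ξ‖ * ‖η‖)) ^ (-(|α - n * β| / (n + 1)))

/-!
Write `x = |ξ|`, `y = |η|`, `t = |τ|`, `p = x y` and `S = p/t + t/p`. When `p ≤ t` we have
`S ≥ 1` and `p S = p²/t + t ≤ p + t ≤ x² + y² + t`, while `x² + y² ≥ 2p ≥ p`. Splitting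
`(x² + y² + t)^{b-1} = (x² + y² + t)^{θ-1} (x² + y² + t)^{b-θ}` and bounding the three
factors of `Ω` by `p^{a-n}`, `(p S)^{θ-1}` and `t^{b-θ}` (all exponents are nonpositive) gives
the first inequality. The second one holds because `S ≥ 1` and
`α - nβ = (a - nb) - (n+1)(1-θ)` with `0 ≤ a - nb < (n+1)(1-θ)`.
-/

lemma one_le_div_add_div {p t : ℝ} (hp : 0 < p) (hpt : p ≤ t) : 1 ≤ p / t + t / p := by
  have h₁ : 1 ≤ t / p := (one_le_div hp).mpr hpt
  have h₀ : 0 ≤ p / t := div_nonneg hp.le (hp.le.trans hpt)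
  linarith

lemma mul_div_add_div_le_add {p t u : ℝ} (hp : 0 < p) (hpt : p ≤ t) (hpu : p ≤ u) :
    p * (p / t + t / p) ≤ u + t := by
  have ht : 0 < t := hp.trans_le hpt
  have hsq : p * p / t ≤ p := (div_le_iff₀ ht).mpr (mul_le_mul_of_nonneg_left hpt hp.le)
  calc p * (p / t + t / p) = p * p / t + t := by field_simp
    _ ≤ u + t := by linarith

theorem sq_add_sq_rpow_mul_le {x y t m a b θ : ℝ} (hx : 0 < x) (hy : 0 < y) (hxyt : x * y ≤ t)
    (ham : a ≤ m) (hbθ : b ≤ θ) (hθ : θ ≤ 1) :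
    (x ^ 2 + y ^ 2) ^ (-(m - a)) * (x ^ 2 + y ^ 2 + t) ^ (-(1 - b)) ≤
      x ^ ((a + θ - 1) - m) * y ^ ((a + θ - 1) - m) * t ^ ((b - θ + 1) - 1) *
        (x * y / t + t / (x * y)) ^ (-(1 - θ)) := by
  have hp : 0 < x * y := mul_pos hx hy
  have ht : 0 < t := hp.trans_le hxyt
  have hpu : x * y ≤ x ^ 2 + y ^ 2 := by linarith [two_mul_le_add_sq x y]
  have hS : 0 < x * y / t + t / (x * y) := one_pos.trans_le (one_le_div_add_div hp hxyt)
  have hu : (x ^ 2 + y ^ 2) ^ (a - m) ≤ (x * y) ^ (a - m) :=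
    rpow_le_rpow_of_nonpos hp hpu (by linarith)
  have hpS : (x ^ 2 + y ^ 2 + t) ^ (θ - 1) ≤ (x * y * (x * y / t + t / (x * y))) ^ (θ - 1) :=
    rpow_le_rpow_of_nonpos (by positivity) (mul_div_add_div_le_add hp hxyt hpu) (by linarith)
  have htb : (x ^ 2 + y ^ 2 + t) ^ (b - θ) ≤ t ^ (b - θ) :=
    rpow_le_rpow_of_nonpos ht (by linarith) (by linarith)
  calc (x ^ 2 + y ^ 2) ^ (-(m - a)) * (x ^ 2 + y ^ 2 + t) ^ (-(1 - b))
      = (x ^ 2 + y ^ 2) ^ (a - m) *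
          ((x ^ 2 + y ^ 2 + t) ^ (θ - 1) * (x ^ 2 + y ^ 2 + t) ^ (b - θ)) := by
        rw [← rpow_add (by positivity)]; ring_nf
    _ ≤ (x * y) ^ (a - m) * ((x * y * (x * y / t + t / (x * y))) ^ (θ - 1) * t ^ (b - θ)) := by
        gcongr
    _ = _ := by
        rw [show (a + θ - 1) - m = (a - m) + (θ - 1) by ring, show (b - θ + 1) - 1 = b - θ by ring,
          show -(1 - θ) = θ - 1 by ring, rpow_add hx, rpow_add hy, mul_rpow hp.le hS.le,
          mul_rpow hx.le hy.le, mul_rpow hx.le hy.le]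
        ring

lemma abs_sub_mul_le_mul_one_sub {m a b θ : ℝ} (hm : 0 ≤ m) (hab : m * b ≤ a)
    (hθ : θ < 1 - (a - m * b) / (m + 1)) :
    |(a + θ - 1) - m * (b - θ + 1)| ≤ (m + 1) * (1 - θ) := by
  have hlt : a - m * b < (m + 1) * (1 - θ) := by
    rw [← div_lt_iff₀' (by linarith)]; linarith
  rw [abs_le]
  constructor <;> linarith

theorem stmt6_general (n : ℕ) (a b θ : ℝ)
    (han : a < n) (hab : n * b ≤ a)
    (hθ1 : b < θ) (hθ2 : θ < 1 - (a - n * b) / (n + 1))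
    (ξ η : En n) (τ : ℝ) (hξ : ξ ≠ 0) (hη : η ≠ 0)
    (hsmall : ‖ξ‖ * ‖η‖ ≤ |τ|) :
    Omker n a b ξ η τ ≤
      ‖ξ‖ ^ ((a + θ - 1) - n) * ‖η‖ ^ ((a + θ - 1) - n) * |τ| ^ ((b - θ + 1) - 1) *
        (‖ξ‖ * ‖η‖ / |τ| + |τ| / (‖ξ‖ * ‖η‖)) ^ (-(1 - θ)) ∧
    ‖ξ‖ ^ ((a + θ - 1) - n) * ‖η‖ ^ ((a + θ - 1) - n) * |τ| ^ ((b - θ + 1) - 1) *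
        (‖ξ‖ * ‖η‖ / |τ| + |τ| / (‖ξ‖ * ‖η‖)) ^ (-(1 - θ)) ≤
      Vker n (a + θ - 1) (b - θ + 1) ξ η τ := by
  have hx : 0 < ‖ξ‖ := norm_pos_iff.mpr hξ
  have hy : 0 < ‖η‖ := norm_pos_iff.mpr hη
  have hn1 : (0 : ℝ) < n + 1 := by positivity
  have hθ : θ ≤ 1 := by
    have := div_nonneg (sub_nonneg.mpr hab) hn1.le
    linarith
  refine ⟨sq_add_sq_rpow_mul_le hx hy hsmall han.le hθ1.le hθ, ?_⟩
  have hS := one_le_div_add_div (mul_pos hx hy) hsmall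
  have hαβ := abs_sub_mul_le_mul_one_sub n.cast_nonneg hab hθ2
  rw [Vker]
  gcongr
  exact (div_le_iff₀' hn1).mpr hαβ

theorem stmt6 (n : ℕ) (hn : 1 ≤ n) (a b θ : ℝ)
    (ha0 : 0 < a) (han : a < n) (hb0 : 0 < b) (hb1 : b < 1) (hab : n * b ≤ a)
    (hθ1 : b < θ) (hθ2 : θ < 1 - (a - n * b) / (n + 1))
    (ξ η : En n) (τ : ℝ) (hξ : ξ ≠ 0) (hη : η ≠ 0) (hτ : τ ≠ 0)
    (hsmall : ‖ξ‖ * ‖η‖ ≤ |τ|) :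
    Omker n a b ξ η τ ≤
      ‖ξ‖ ^ ((a + θ - 1) - n) * ‖η‖ ^ ((a + θ - 1) - n) * |τ| ^ ((b - θ + 1) - 1) *
        (‖ξ‖ * ‖η‖ / |τ| + |τ| / (‖ξ‖ * ‖η‖)) ^ (-(1 - θ)) ∧
    ‖ξ‖ ^ ((a + θ - 1) - n) * ‖η‖ ^ ((a + θ - 1) - n) * |τ| ^ ((b - θ + 1) - 1) *
        (‖ξ‖ * ‖η‖ / |τ| + |τ| / (‖ξ‖ * ‖η‖)) ^ (-(1 - θ)) ≤
      Vker n (a + θ - 1) (b - θ + 1) ξ η τ :=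
  stmt6_general n a b θ han hab hθ1 hθ2 ξ η τ hξ hη hsmall
end
end

section
/- Let n ≥ 1, 0 < a < n, 0 < b < 1 with a ≥ n·b, and fix any θ with b < θ < 1 − (a−nb)/(n+1). Then for all ξ, η ∈ ℝⁿ and τ ∈ ℝ with ξ ≠ 0, η ≠ 0, τ ≠ 0, the kernel Ω^{ab} satisfies Ω^{ab}(ξ,η,τ) ≤ V^{a,b}(ξ,η,τ) + V^{a+θ−1, b−θ+1}(ξ,η,τ); in particular Ω^{ab} is bounded by a sum of two kernels V^{αβ} with α + β = a + b. -/
open MeasureTheory Real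
open scoped ENNReal

noncomputable section

/-!
Write `w = ‖ξ‖ ‖η‖`, `u = |τ|` and `S = ‖ξ‖² + ‖η‖² ≥ 2w`, so that
`Ω^{ab} = S^{-p} (S + u)^{-q}` with `p = n - a`, `q = 1 - b`, and both kernels are of the form
`w^{·} u^{·} (w/u + u/w)^{-γ}` with `γ = (a - nb)/(n+1)` resp. `γ = 1 - θ - (a - nb)/(n+1)`.
Since `w/u + u/w ≤ 2 max(w/u, u/w)`, the first kernel dominates `Ω^{ab}` where `u ≤ w`
(bound `S + u ≥ S ≥ 2w`), and the second one where `w ≤ u` (split `(S + u)^{-q}` and bound one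
factor by `(2w)^{-γ}`, the other by `u^{γ - q}`).
-/

lemma two_rpow_neg_mul_le_div_add_div_rpow {w u γ : ℝ} (hu : 0 < u) (huw : u ≤ w) (hγ : 0 ≤ γ) :
    2 ^ (-γ) * w ^ (-γ) * u ^ γ ≤ (w / u + u / w) ^ (-γ) := by
  have hw : 0 < w := hu.trans_le huw
  have hsum : w / u + u / w ≤ 2 * (w / u) := by
    have : u / w ≤ w / u := by rw [div_le_div_iff₀ hw hu]; nlinarith
    linarith
  calc 2 ^ (-γ) * w ^ (-γ) * u ^ γ = (2 * (w / u)) ^ (-γ) := by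
        rw [mul_rpow two_pos.le (div_pos hw hu).le, div_rpow hw.le hu.le, rpow_neg hu.le,
          div_inv_eq_mul, mul_assoc]
    _ ≤ (w / u + u / w) ^ (-γ) := rpow_le_rpow_of_nonpos (by positivity) hsum (neg_nonpos.2 hγ)

section

variable {S w u p q g c : ℝ}

lemma rpow_neg_mul_rpow_neg_le_of_le (hu : 0 < u) (huw : u ≤ w) (hS : 2 * w ≤ S)
    (hp : 0 ≤ p) (hg : 0 ≤ g) (hgq : g ≤ q) :
    S ^ (-p) * (S + u) ^ (-q) ≤ w ^ (-p) * u ^ (-q) * (w / u + u / w) ^ (-g) := by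
  have hw : 0 < w := hu.trans_le huw
  have hS0 : 0 < S := by linarith
  calc S ^ (-p) * (S + u) ^ (-q)
      ≤ S ^ (-p) * S ^ (-q) := by
        refine mul_le_mul_of_nonneg_left ?_ (by positivity)
        exact rpow_le_rpow_of_nonpos hS0 (by linarith) (by linarith)
    _ = S ^ (-p - q) := (rpow_add hS0 _ _).symm
    _ ≤ (2 * w) ^ (-p - q) := rpow_le_rpow_of_nonpos (by positivity) hS (by linarith)
    _ = 2 ^ (-p - q) * w ^ (-p - q) := mul_rpow two_pos.le hw.le
    _ ≤ 2 ^ (-g) * w ^ (-p - q) := by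
        gcongr
        exacts [one_le_two, by linarith]
    _ = 2 ^ (-g) * w ^ (-p - g) * w ^ (g - q) := by
        rw [mul_assoc, ← rpow_add hw]; ring_nf
    _ ≤ 2 ^ (-g) * w ^ (-p - g) * u ^ (g - q) := by
        refine mul_le_mul_of_nonneg_left ?_ (by positivity)
        exact rpow_le_rpow_of_nonpos hu huw (by linarith)
    _ = w ^ (-p) * u ^ (-q) * (2 ^ (-g) * w ^ (-g) * u ^ g) := by
        rw [show -p - g = -p + -g by ring, show g - q = g + -q by ring, rpow_add hw, rpow_add hu]
        ring
    _ ≤ w ^ (-p) * u ^ (-q) * (w / u + u / w) ^ (-g) := by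
        gcongr
        exact two_rpow_neg_mul_le_div_add_div_rpow hu huw hg

lemma rpow_neg_mul_rpow_neg_le_of_ge (hw : 0 < w) (hwu : w ≤ u) (hS : 2 * w ≤ S)
    (hp : 0 ≤ p) (hg : 0 ≤ g) (hgq : g ≤ q) (hc : 0 ≤ c) (hcpg : c ≤ p + g) :
    S ^ (-p) * (S + u) ^ (-q) ≤
      w ^ (-p - g - c) * u ^ (-q + g + c) * (w / u + u / w) ^ (-c) := by
  have hu : 0 < u := hw.trans_le hwu
  have hSu : 0 < S + u := by linarith
  calc S ^ (-p) * (S + u) ^ (-q)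
      = S ^ (-p) * (S + u) ^ (-g) * (S + u) ^ (g - q) := by
        rw [mul_assoc, ← rpow_add hSu]; ring_nf
    _ ≤ (2 * w) ^ (-p) * (2 * w) ^ (-g) * u ^ (g - q) := by
        gcongr ?_ * ?_ * ?_
        · exact rpow_le_rpow_of_nonpos (by positivity) hS (by linarith)
        · exact rpow_le_rpow_of_nonpos (by positivity) (by linarith) (by linarith)
        · exact rpow_le_rpow_of_nonpos hu (by linarith) (by linarith)
    _ = 2 ^ (-p - g) * (w ^ (-p - g) * u ^ (g - q)) := by
        rw [← rpow_add (by positivity), mul_rpow two_pos.le hw.le]; ring_nf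
    _ ≤ 2 ^ (-c) * (w ^ (-p - g) * u ^ (g - q)) := by
        gcongr
        exacts [one_le_two, by linarith]
    _ = w ^ (-p - g - c) * u ^ (-q + g + c) * (2 ^ (-c) * u ^ (-c) * w ^ c) := by
        have hw' : w ^ (-p - g) = w ^ (-p - g - c) * w ^ c := by rw [← rpow_add hw]; ring_nf
        have hu' : u ^ (g - q) = u ^ (-q + g + c) * u ^ (-c) := by rw [← rpow_add hu]; ring_nf
        rw [hw', hu']; ring
    _ ≤ w ^ (-p - g - c) * u ^ (-q + g + c) * (w / u + u / w) ^ (-c) := by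
        rw [add_comm (w / u)]
        gcongr
        exact two_rpow_neg_mul_le_div_add_div_rpow hw hwu hc

lemma rpow_neg_mul_rpow_neg_le_add (hw : 0 < w) (hu : 0 < u) (hS : 2 * w ≤ S)
    (hp : 0 ≤ p) (hg : 0 ≤ g) (hgq : g ≤ q) (hc : 0 ≤ c) (hcpg : c ≤ p + g) :
    S ^ (-p) * (S + u) ^ (-q) ≤
      w ^ (-p) * u ^ (-q) * (w / u + u / w) ^ (-g) +
        w ^ (-p - g - c) * u ^ (-q + g + c) * (w / u + u / w) ^ (-c) := by
  rcases le_total u w with huw | hwu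
  · exact (rpow_neg_mul_rpow_neg_le_of_le hu huw hS hp hg hgq).trans
      (le_add_of_nonneg_right (by positivity))
  · exact (rpow_neg_mul_rpow_neg_le_of_ge hw hwu hS hp hg hgq hc hcpg).trans
      (le_add_of_nonneg_left (by positivity))

end

theorem stmt7_general (n : ℕ) (hn : 1 ≤ n) (a b θ : ℝ)
    (han : a < n) (hab : n * b ≤ a)
    (hθ1 : b < θ) (hθ2 : θ < 1 - (a - n * b) / (n + 1))
    (ξ η : En n) (τ : ℝ) (hξ : ξ ≠ 0) (hη : η ≠ 0) (hτ : τ ≠ 0) :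
    Omker n a b ξ η τ ≤
      Vker n a b ξ η τ + Vker n (a + θ - 1) (b - θ + 1) ξ η τ := by
  set g := (a - n * b) / (n + 1) with hg_def
  have hN : (0 : ℝ) < n + 1 := by positivity
  have hg : 0 ≤ g := div_nonneg (by linarith) hN.le
  have hgq : g ≤ 1 - b := by rw [div_le_iff₀ hN]; nlinarith
  have hcpg : 1 - θ - g ≤ n - a + g := by
    have hn' : (1 : ℝ) ≤ n := by exact_mod_cast hn
    have h2g : a - n + 1 - b ≤ 2 * g := by
      rw [hg_def, ← mul_div_assoc, le_div_iff₀ hN]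
      -- `(n + 1) * (a - n + 1 - b) - 2 * (a - n * b) = (n - 1) * (a + b - n - 1)`
      nlinarith [mul_nonpos_of_nonneg_of_nonpos (sub_nonneg.2 hn')
        (by linarith : a + b - n - 1 ≤ 0)]
    linarith
  have habs₁ : |a - n * b| / (n + 1) = g := by rw [abs_of_nonneg (by linarith)]
  have habs₂ : |a + θ - 1 - n * (b - θ + 1)| / (n + 1) = 1 - θ - g := by
    rw [show a + θ - 1 - n * (b - θ + 1) = -((n + 1) * (1 - θ - g)) by
        rw [hg_def]; field_simp; ring,
      abs_neg, abs_of_nonneg (by nlinarith), mul_div_cancel_left₀ _ hN.ne']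
  have hs : 0 < ‖ξ‖ := norm_pos_iff.2 hξ
  have ht : 0 < ‖η‖ := norm_pos_iff.2 hη
  have key := rpow_neg_mul_rpow_neg_le_add (mul_pos hs ht) (abs_pos.2 hτ)
    ((mul_assoc 2 _ _).symm.trans_le (two_mul_le_add_sq ‖ξ‖ ‖η‖)) (sub_nonneg.2 han.le)
    hg hgq (by linarith) hcpg
  simp only [Omker, Vker, habs₁, habs₂, ← mul_rpow hs.le ht.le]
  convert key using 5 <;> ring

theorem stmt7 (n : ℕ) (hn : 1 ≤ n) (a b θ : ℝ)
    (ha0 : 0 < a) (han : a < n) (hb0 : 0 < b) (hb1 : b < 1) (hab : n * b ≤ a)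
    (hθ1 : b < θ) (hθ2 : θ < 1 - (a - n * b) / (n + 1))
    (ξ η : En n) (τ : ℝ) (hξ : ξ ≠ 0) (hη : η ≠ 0) (hτ : τ ≠ 0) :
    Omker n a b ξ η τ ≤
      Vker n a b ξ η τ + Vker n (a + θ - 1) (b - θ + 1) ξ η τ :=
  stmt7_general n hn a b θ han hab hθ1 hθ2 ξ η τ hξ hη hτ
end
end
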